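/- arXiv:1411.5293 — 7 statements merged into one kernel-verified Lean document; each statement's English description precedes it below -/
import Mathlib

section
/- In U(osp(1,2)), with z = b⁺b⁻ - b⁻b⁺ + 1, e = (1/2)(b⁺)², f = -(1/2)(b⁻)², and ω = 4ef + k² - 2k, one has z² = 4ω - 2z + 3, equivalently (z+1)² = 4(ω+1). -/
/-!
With `X = b⁺b⁻` one has `z + 1 = 2 (X - (k - 1))` and `4ef = -(b⁺)²(b⁻)²`, so
`ω + 1 = -(b⁺)²(b⁻)² + (k - 1)²`. The relations make `k` commute with `X` and give
`X² = -(b⁺)²(b⁻)² + 2X(k - 1)`; hence `(X - (k - 1))² = -(b⁺)²(b⁻)² + (k - 1)²`, which is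
`(z + 1)² = 4(ω + 1)`. The other identity is the same one with `(z + 1)²` expanded.
-/

section

variable {R : Type*} [Ring R] {a b k : R}

theorem commute_mul_of_sub_eq_self_of_sub_eq_neg (ha : k * a - a * k = a)
    (hb : k * b - b * k = -b) : Commute k (a * b) := by
  rw [sub_eq_iff_eq_add] at ha hb
  calc k * (a * b) = (a + a * k) * b := by rw [← mul_assoc, ha]
    _ = a * (k * b) + a * b := by noncomm_ring
    _ = a * b * k := by rw [hb]; noncomm_ring

theorem mul_mul_self_eq_of_anticomm (hab : b * a = -(a * b) + 2 * k)
    (hb : k * b - b * k = -b) :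
    a * b * (a * b) = -(a * a * (b * b)) + 2 * (a * b) * (k - 1) := by
  rw [sub_eq_iff_eq_add] at hb
  calc a * b * (a * b) = a * (b * a) * b := by noncomm_ring
    _ = -(a * a * (b * b)) + 2 * (a * (k * b)) := by
      rw [hab]; noncomm_ring [show (2 : R) = 1 + 1 from one_add_one_eq_two.symm]
    _ = -(a * a * (b * b)) + 2 * (a * b) * (k - 1) := by
      rw [hb]; noncomm_ring

theorem sub_sq_eq_of_anticomm (ha : k * a - a * k = a) (hb : k * b - b * k = -b)
    (hab : b * a = -(a * b) + 2 * k) :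
    (a * b - (k - 1)) ^ 2 = -(a * a * (b * b)) + (k - 1) ^ 2 := by
  have hcomm : Commute (a * b) (k - 1) :=
    ((commute_mul_of_sub_eq_self_of_sub_eq_neg ha hb).sub_left (Commute.one_left _)).symm
  rw [hcomm.sub_sq, sq, mul_mul_self_eq_of_anticomm hab hb]
  abel

end

theorem four_mul_smul_half_mul_smul_half {K R : Type*} [Field K] [NeZero (2 : K)] [Ring R]
    [Algebra K R] (x y : R) : 4 * ((1 / 2 : K) • x * (1 / 2 : K) • y) = x * y := by
  have h4 : (4 : K) * (1 / 2 * (1 / 2)) = 1 := by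
    rw [show (4 : K) = 2 * 2 by norm_num]
    field_simp
  rw [smul_mul_smul, Algebra.smul_def, ← mul_assoc, ← map_ofNat (algebraMap K R) 4, ← map_mul, h4,
    map_one, one_mul]

/-- In `U(osp(1,2))`, with `z = b⁺b⁻ - b⁻b⁺ + 1`, `e = (1/2)(b⁺)²`,
`f = -(1/2)(b⁻)²` and `ω = 4ef + k² - 2k`, one has `z² = 4ω - 2z + 3`,
equivalently `(z+1)² = 4(ω+1)`. -/
theorem stmt_6 (R : Type*) [Ring R] [Algebra ℂ R] (bp bm k : R)
    (h1 : k * bp - bp * k = bp)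
    (h2 : k * bm - bm * k = -bm)
    (h3 : bm * bp = -(bp * bm) + 2 * k)
    (z e f ω : R)
    (hz : z = bp * bm - bm * bp + 1)
    (he : e = (1 / 2 : ℂ) • (bp * bp))
    (hf : f = -((1 / 2 : ℂ) • (bm * bm)))
    (hω : ω = 4 * (e * f) + k ^ 2 - 2 * k) :
    z ^ 2 = 4 * ω - 2 * z + 3 ∧ (z + 1) ^ 2 = 4 * (ω + 1) := by
  have hz1 : z + 1 = 2 * (bp * bm - (k - 1)) := by
    rw [hz, h3]; noncomm_ring [show (2 : R) = 1 + 1 from one_add_one_eq_two.symm]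
  have hω1 : ω + 1 = -(bp * bp * (bm * bm)) + (k - 1) ^ 2 := by
    rw [hω, he, hf, mul_neg, mul_neg, four_mul_smul_half_mul_smul_half]
    noncomm_ring
  have hsq : (z + 1) ^ 2 = 4 * (ω + 1) := by
    rw [hz1, (Commute.ofNat_left 2 _).mul_pow, sub_sq_eq_of_anticomm h1 h2 h3, hω1]
    norm_num
  refine ⟨?_, hsq⟩
  calc z ^ 2 = (z + 1) ^ 2 - 2 * z - 1 := by noncomm_ring
    _ = 4 * ω - 2 * z + 3 := by
      rw [hsq]; noncomm_ring [show (3 : R) = 1 + 1 + 1 by norm_num]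
end

section
/- In U(osp(1,2)), the super Casimir θ := ω - (1/2)(b⁺b⁻ - b⁻b⁺) and the Casimir ω = 4ef + k² - 2k satisfy the algebraic relation ω² - (2θ - 1)ω + θ(θ - 2) = 0. -/
/-! Put `t = b⁺b⁻ - k`. The anticommutation relation gives `(1/2)(b⁺b⁻ - b⁻b⁺) = t`, so
`θ = ω - t`; rewriting `b⁺(b⁻b⁺)b⁻` by the anticommutation relation and moving `k` past
`b⁺` and `b⁻` gives `4ef = -(b⁺)²(b⁻)²` and `ω = t² + 2t`. Thus `ω` and `θ` are polynomials
in the single element `t`, and the relation becomes a polynomial identity. -/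

section

variable {R : Type*} [Ring R]

theorem quadratic_relation_of_eq_sq_add_two_mul {t ω θ : R} (hω : ω = t ^ 2 + 2 * t)
    (hθ : θ = ω - t) : ω ^ 2 - (2 * θ - 1) * ω + θ * (θ - 2) = 0 := by
  subst hθ hω
  noncomm_ring

section Scalars

variable {K : Type*} [Field K] [NeZero (2 : K)] [Algebra K R]

theorem half_smul_two_mul (a : R) : (1 / 2 : K) • (2 * a) = a := by
  rw [two_mul, ← two_smul K, smul_smul, one_div, inv_mul_cancel₀ two_ne_zero, one_smul]

theorem four_mul_half_smul_mul_neg_half_smul (a b : R) :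
    4 * ((1 / 2 : K) • a * -((1 / 2 : K) • b)) = -(a * b) := by
  have h4 : (4 : K) * (1 / 2 * (1 / 2)) = 1 := by field_simp; norm_num
  rw [mul_neg, smul_mul_smul_comm, mul_neg, ← map_ofNat (algebraMap K R) 4, ← Algebra.smul_def,
    smul_smul, h4, one_smul]

end Scalars

section Osp12

variable {bp bm k : R}

theorem mul_sub_mul_eq_two_mul_sub (h3 : bm * bp = -(bp * bm) + 2 * k) :
    bp * bm - bm * bp = 2 * (bp * bm - k) := by
  linear_combination (norm := noncomm_ring) -h3

theorem neg_mul_add_sq_sub_two_mul_eq_sq_add_two_mul (h1 : k * bp - bp * k = bp)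
    (h2 : k * bm - bm * k = -bm) (h3 : bm * bp = -(bp * bm) + 2 * k) :
    -(bp * bp * (bm * bm)) + k ^ 2 - 2 * k = (bp * bm - k) ^ 2 + 2 * (bp * bm - k) := by
  linear_combination (norm := noncomm_ring) -(bp * h3 * bm) + h1 * bm - bp * h2

end Osp12

end

/-- In `U(osp(1,2))`, the super Casimir `θ = ω - (1/2)(b⁺b⁻ - b⁻b⁺)` and the
Casimir `ω = 4ef + k² - 2k` satisfy `ω² - (2θ - 1)ω + θ(θ - 2) = 0`. -/
theorem stmt_7 (R : Type*) [Ring R] [Algebra ℂ R] (bp bm k : R)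
    (h1 : k * bp - bp * k = bp)
    (h2 : k * bm - bm * k = -bm)
    (h3 : bm * bp = -(bp * bm) + 2 * k)
    (e f ω θ : R)
    (he : e = (1 / 2 : ℂ) • (bp * bp))
    (hf : f = -((1 / 2 : ℂ) • (bm * bm)))
    (hω : ω = 4 * (e * f) + k ^ 2 - 2 * k)
    (hθ : θ = ω - (1 / 2 : ℂ) • (bp * bm - bm * bp)) :
    ω ^ 2 - (2 * θ - 1) * ω + θ * (θ - 2) = 0 := by
  apply quadratic_relation_of_eq_sq_add_two_mul (t := bp * bm - k)
  · rw [hω, he, hf, four_mul_half_smul_mul_neg_half_smul,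
      neg_mul_add_sq_sub_two_mul_eq_sq_add_two_mul h1 h2 h3]
  · rw [hθ, mul_sub_mul_eq_two_mul_sub h3, half_smul_two_mul]
end

section
/- In U(n⁺) as above, the element y := b₁⁺b₂⁺ - a⁺ commutes with a⁺ and with t. -/
/-! Both `a` and `b₁b₂` commute with `a`, so `y` does. For `t`, the commutator `[t, ·]` is a
derivation, so `[t, b₁b₂] = [t, b₁] b₂ + b₁ [t, b₂] = b₁²`, which is also `[t, a]`; hence
`[t, y] = 0`. -/

section

variable {R : Type*} [Ring R]

theorem mul_mul_eq_of_commute_of_mul_eq_add {t x z c : R} (hx : Commute t x)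
    (hz : t * z = z * t + c) : t * (x * z) = x * z * t + x * c := by
  rw [← mul_assoc, hx.eq, mul_assoc, hz]
  noncomm_ring

theorem Commute.sub_of_mul_eq_add {t x z c : R} (hx : t * x = x * t + c)
    (hz : t * z = z * t + c) : Commute (x - z) t := by
  rw [Commute, SemiconjBy, sub_mul, mul_sub, hx, hz]
  noncomm_ring

end

theorem stmt_10_general (R : Type*) [Ring R] (b1 b2 a t : R)
    (h1 : b1 * a = a * b1)
    (h2 : b2 * a = a * b2)
    (h4 : t * b1 = b1 * t)
    (h5 : t * a = a * t + b1 * b1)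
    (h6 : t * b2 = b2 * t + b1) :
    (b1 * b2 - a) * a = a * (b1 * b2 - a) ∧
    (b1 * b2 - a) * t = t * (b1 * b2 - a) := by
  constructor
  · exact ((Commute.mul_left h1 h2).sub_left (Commute.refl a)).eq
  · exact (Commute.sub_of_mul_eq_add (mul_mul_eq_of_commute_of_mul_eq_add h4 h6) h5).eq

/-- In `U(n⁺)`, the element `y := b₁⁺b₂⁺ - a⁺` commutes with `a⁺` and with `t`. -/
theorem stmt_10 (R : Type*) [Ring R] [Algebra ℂ R] (b1 b2 a t : R)
    (h1 : b1 * a = a * b1)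
    (h2 : b2 * a = a * b2)
    (h3 : b2 * b1 = -(b1 * b2) + 2 * a)
    (h4 : t * b1 = b1 * t)
    (h5 : t * a = a * t + b1 * b1)
    (h6 : t * b2 = b2 * t + b1) :
    (b1 * b2 - a) * a = a * (b1 * b2 - a) ∧
    (b1 * b2 - a) * t = t * (b1 * b2 - a) :=
  stmt_10_general R b1 b2 a t h1 h2 h4 h5 h6
end

section
/- In any localization of U(n⁺) where b₁⁺ is invertible, the element t' := (b₁⁺)⁻² t satisfies t'a⁺ - a⁺t' = 1, t'b₁⁺ = b₁⁺t', and t'y = yt' where y = b₁⁺b₂⁺ - a⁺. -/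
/-! Write `s = (b₁⁺)⁻²` and `t' = s t`. Since `b₁⁺` commutes with `a⁺` and with the anticommutator
`b₁⁺b₂⁺ + b₂⁺b₁⁺ = 2a⁺`, its square commutes with `b₂⁺`; hence `s` commutes with `a⁺`, `b₁⁺` and `b₂⁺`,
and the commutators of `t'` are `s` times those of `t`: `[t', a⁺] = s (b₁⁺)² = 1`, `[t', b₁⁺] = 0` and
`[t', b₂⁺] = s b₁⁺ = (b₁⁺)⁻¹`. Then `[t', b₁⁺b₂⁺ - a⁺] = b₁⁺ (b₁⁺)⁻¹ - 1 = 0`. -/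

section

variable {R : Type*} [Ring R]

theorem Commute.mul_self_of_commute_add_mul {x y : R} (h : Commute x (x * y + y * x)) :
    Commute (x * x) y := by
  calc x * x * y = x * (x * y + y * x) - x * y * x := by noncomm_ring
    _ = (x * y + y * x) * x - x * y * x := by rw [h.eq]
    _ = y * (x * x) := by noncomm_ring

theorem Commute.mul_left_mul_sub_mul {s y : R} (h : Commute s y) (x : R) :
    s * x * y - y * (s * x) = s * (x * y - y * x) := by
  rw [mul_sub, ← mul_assoc y, ← h.eq, mul_assoc, mul_assoc]

theorem Commute.mul_mul_right_sub_mul {z x : R} (h : Commute z x) (y : R) :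
    z * (x * y) - x * y * z = x * (z * y - y * z) := by
  rw [mul_sub, ← mul_assoc z, h.eq, mul_assoc, mul_assoc]

end

theorem stmt_12_general (R : Type*) [Ring R] (b1 b2 a t b1inv : R)
    (h1 : b1 * a = a * b1)
    (h3 : b2 * b1 = -(b1 * b2) + 2 * a)
    (h4 : t * b1 = b1 * t)
    (h5 : t * a = a * t + b1 * b1)
    (h6 : t * b2 = b2 * t + b1)
    (hinv1 : b1 * b1inv = 1) (hinv2 : b1inv * b1 = 1) :
    (b1inv * b1inv * t) * a - a * (b1inv * b1inv * t) = 1 ∧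
    (b1inv * b1inv * t) * b1 = b1 * (b1inv * b1inv * t) ∧
    (b1inv * b1inv * t) * (b1 * b2 - a) = (b1 * b2 - a) * (b1inv * b1inv * t) := by
  let b : Rˣ := ⟨b1, b1inv, hinv1, hinv2⟩
  have hb1a : Commute b1 a := h1
  have hb1b2 : Commute (b1 * b1) b2 := Commute.mul_self_of_commute_add_mul <| by
    rw [h3, add_neg_cancel_left]
    exact (Commute.ofNat_right b1 2).mul_right hb1a
  have hsa : Commute (b1inv * b1inv) a := Commute.units_inv_left (u := b * b) (hb1a.mul_left hb1a)
  have hsb1 : Commute (b1inv * b1inv) b1 :=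
    Commute.units_inv_left (u := b * b) ((Commute.refl b1).mul_left (Commute.refl b1))
  have hsb2 : Commute (b1inv * b1inv) b2 := Commute.units_inv_left (u := b * b) hb1b2
  have hta : b1inv * b1inv * t * a - a * (b1inv * b1inv * t) = 1 := by
    rw [hsa.mul_left_mul_sub_mul, h5, add_sub_cancel_left]
    exact (b * b).inv_mul
  have htb1 : Commute (b1inv * b1inv * t) b1 := hsb1.mul_left h4
  have htb2 : b1inv * b1inv * t * b2 - b2 * (b1inv * b1inv * t) = b1inv := by
    rw [hsb2.mul_left_mul_sub_mul, h6, add_sub_cancel_left, mul_assoc, hinv2, mul_one]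
  refine ⟨hta, htb1, sub_eq_zero.mp ?_⟩
  rw [mul_sub, sub_mul, sub_sub_sub_comm, htb1.mul_mul_right_sub_mul, htb2, hinv1, hta, sub_self]

/-- In any localization of `U(n⁺)` in which `b₁⁺` is invertible, the element
`t' := (b₁⁺)⁻² t` satisfies `t'a⁺ - a⁺t' = 1`, `t'b₁⁺ = b₁⁺t'` and `t'y = yt'`
where `y = b₁⁺b₂⁺ - a⁺`. -/
theorem stmt_12 (R : Type*) [Ring R] [Algebra ℂ R] (b1 b2 a t b1inv : R)
    (h1 : b1 * a = a * b1)
    (h2 : b2 * a = a * b2)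
    (h3 : b2 * b1 = -(b1 * b2) + 2 * a)
    (h4 : t * b1 = b1 * t)
    (h5 : t * a = a * t + b1 * b1)
    (h6 : t * b2 = b2 * t + b1)
    (hinv1 : b1 * b1inv = 1) (hinv2 : b1inv * b1 = 1) :
    (b1inv * b1inv * t) * a - a * (b1inv * b1inv * t) = 1 ∧
    (b1inv * b1inv * t) * b1 = b1 * (b1inv * b1inv * t) ∧
    (b1inv * b1inv * t) * (b1 * b2 - a) = (b1 * b2 - a) * (b1inv * b1inv * t) :=
  stmt_12_general R b1 b2 a t b1inv h1 h3 h4 h5 h6 hinv1 hinv2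
end

section
/- The universal enveloping algebra of the Lie superalgebra osp(1,2) is isomorphic as a ℂ-algebra to the iterated Ore extension ℂ[b⁺][k; δ][b⁻; τ, d], where δ = b⁺∂_{b⁺} on ℂ[b⁺], τ is the automorphism of ℂ[b⁺][k; δ] with τ(b⁺) = -b⁺, τ(k) = k+1, and d is the τ-derivation with d(b⁺) = 2k, d(k) = 0. -/
/-- The defining relations of `U(osp(1,2))` on the free algebra on three
generators `b⁺ = X 0`, `k = X 1`, `b⁻ = X 2`:
`kb⁺ - b⁺k = b⁺`, `kb⁻ - b⁻k = -b⁻`, `b⁻b⁺ + b⁺b⁻ = 2k`. -/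
inductive OspRel : FreeAlgebra ℂ (Fin 3) → FreeAlgebra ℂ (Fin 3) → Prop
  | rel1 : OspRel (FreeAlgebra.ι ℂ 1 * FreeAlgebra.ι ℂ 0 - FreeAlgebra.ι ℂ 0 * FreeAlgebra.ι ℂ 1)
      (FreeAlgebra.ι ℂ 0)
  | rel2 : OspRel (FreeAlgebra.ι ℂ 1 * FreeAlgebra.ι ℂ 2 - FreeAlgebra.ι ℂ 2 * FreeAlgebra.ι ℂ 1)
      (-FreeAlgebra.ι ℂ 2)
  | rel3 : OspRel (FreeAlgebra.ι ℂ 2 * FreeAlgebra.ι ℂ 0 + FreeAlgebra.ι ℂ 0 * FreeAlgebra.ι ℂ 2)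
      (2 * FreeAlgebra.ι ℂ 1)

/-- The enveloping algebra `U(osp(1,2))`. -/
def UOsp12 : Type := RingQuot OspRel

noncomputable instance : Ring UOsp12 := inferInstanceAs (Ring (RingQuot OspRel))
noncomputable instance : Algebra ℂ UOsp12 := inferInstanceAs (Algebra ℂ (RingQuot OspRel))

/-!
`U(osp(1,2))` acts on `ℂ[x, t, z]` the way the Ore extension `ℂ[b⁺][k; δ][b⁻; τ, d]`
acts on itself by left multiplication, after identifying `b⁺ⁱ kʲ b⁻ˡ` with `xⁱ tʲ zˡ`. The ordered
monomial `b⁺ⁱ kʲ b⁻ˡ` of `U` sends `1` to `xⁱ tʲ zˡ`, so the ordered monomials are linearly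
independent. They span because the three straightening relations make their span stable under
left multiplication by each generator. Hence they form a basis of `U`, and `U` itself is the
Ore extension.
-/

open MvPolynomial

noncomputable section

namespace MvPolynomial

section CommSemiring

variable {σ R : Type*} [CommSemiring R]

def oddDivX (i : σ) : MvPolynomial σ R →ₗ[R] MvPolynomial σ R :=
  (basisMonomials σ R).constr R fun d =>
    if Odd (d i) then monomial (d - Finsupp.single i 1) 1 else 0

theorem oddDivX_monomial (i : σ) (d : σ →₀ ℕ) (c : R) :
    oddDivX i (monomial d c) = if Odd (d i) then monomial (d - Finsupp.single i 1) c else 0 := by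
  have hc : monomial d c = c • basisMonomials σ R d := by simp [smul_monomial]
  rw [hc, map_smul, oddDivX, Module.Basis.constr_basis]
  split_ifs <;> simp [smul_monomial]

theorem X_mul_oddDivX_monomial (i : σ) (d : σ →₀ ℕ) (c : R) :
    X i * oddDivX i (monomial d c) = if Odd (d i) then monomial d c else 0 := by
  rw [oddDivX_monomial]
  split_ifs with hd
  · have hle : Finsupp.single i 1 ≤ d :=
      Finsupp.single_le_iff.2 (Nat.one_le_iff_ne_zero.2 hd.pos.ne')
    rw [X, monomial_mul, one_mul, add_tsub_cancel_of_le hle]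
  · exact mul_zero _

@[simp] theorem pderiv_ofNat (i : σ) (n : ℕ) [n.AtLeastTwo] :
    pderiv i (ofNat(n) : MvPolynomial σ R) = 0 :=
  (pderiv i).map_natCast n

end CommSemiring

variable {σ R : Type*} [CommRing R]

theorem two_mul_X_ne_zero [IsDomain R] [CharZero R] (i : σ) : (2 * X i : MvPolynomial σ R) ≠ 0 :=
  mul_ne_zero two_ne_zero (X_ne_zero i)

variable [DecidableEq σ]

def reflectX (i : σ) : MvPolynomial σ R →ₐ[R] MvPolynomial σ R :=
  aeval (Function.update X i (-X i))

@[simp] theorem reflectX_X_self (i : σ) : reflectX i (X i : MvPolynomial σ R) = -X i := by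
  simp [reflectX]

@[simp] theorem reflectX_X_of_ne {i j : σ} (h : j ≠ i) :
    reflectX i (X j : MvPolynomial σ R) = X j := by
  simp [reflectX, h]

theorem reflectX_monomial (i : σ) (d : σ →₀ ℕ) (c : R) :
    reflectX i (monomial d c) = (-1) ^ d i * monomial d c := by
  have hX : Function.update (X : σ → MvPolynomial σ R) i (-X i) =
      fun j => (if j = i then -1 else 1) * X j := by
    ext1 j; by_cases h : j = i <;> simp [h]
  rw [reflectX, aeval_monomial, hX]
  simp only [mul_pow, Finsupp.prod_mul, ite_pow, one_pow]
  rw [monomial_eq, Finsupp.prod_ite_eq', algebraMap_eq]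
  split_ifs with h
  · ring
  · rw [Finsupp.notMem_support_iff.1 h, pow_zero]; ring

theorem two_mul_X_mul_oddDivX (i : σ) (p : MvPolynomial σ R) :
    2 * X i * oddDivX i p = p - reflectX i p := by
  induction p using MvPolynomial.induction_on' with
  | monomial d c =>
    rw [mul_assoc, X_mul_oddDivX_monomial, reflectX_monomial]
    rcases Nat.even_or_odd (d i) with hd | hd
    · rw [if_neg (Nat.not_odd_iff_even.2 hd), hd.neg_one_pow]; ring
    · rw [if_pos hd, hd.neg_one_pow]; ring
  | add p q hp hq => rw [map_add, map_add, mul_add, hp, hq]; ring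

theorem pderiv_map_of_map_X_eq_neg (i : σ) {f : MvPolynomial σ R →ₐ[R] MvPolynomial σ R}
    (hi : f (X i) = -X i) (hj : ∀ j ≠ i, pderiv i (f (X j)) = 0) (p : MvPolynomial σ R) :
    pderiv i (f p) = -f (pderiv i p) := by
  induction p using MvPolynomial.induction_on with
  | C a => simp
  | add p q hp hq => simp only [map_add, hp, hq, neg_add]
  | mul_X p j hp =>
    rw [map_mul, pderiv_mul, pderiv_mul, hp, map_add, map_mul, map_mul]
    by_cases h : j = i
    · subst h; simp [hi]; ring
    · simp [hj j h, pderiv_X_of_ne h]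

theorem pderiv_reflectX (i : σ) (p : MvPolynomial σ R) :
    pderiv i (reflectX i p) = -reflectX i (pderiv i p) :=
  pderiv_map_of_map_X_eq_neg i (reflectX_X_self i) (fun j hj => by
    rw [reflectX_X_of_ne hj, pderiv_X_of_ne hj]) p

variable [IsDomain R] [CharZero R]

theorem oddDivX_X_mul (i : σ) (p : MvPolynomial σ R) :
    oddDivX i (X i * p) = p - X i * oddDivX i p := by
  refine mul_left_cancel₀ (two_mul_X_ne_zero i) ?_
  have hr : reflectX i (X i * p) = -X i * reflectX i p := by simp
  linear_combination two_mul_X_mul_oddDivX i (X i * p) + X i * two_mul_X_mul_oddDivX i p - hr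

theorem oddDivX_X_mul_of_ne {i j : σ} (h : j ≠ i) (p : MvPolynomial σ R) :
    oddDivX i (X j * p) = X j * oddDivX i p := by
  refine mul_left_cancel₀ (two_mul_X_ne_zero i) ?_
  have hr : reflectX i (X j * p) = X j * reflectX i p := by simp [h]
  linear_combination two_mul_X_mul_oddDivX i (X j * p) - X j * two_mul_X_mul_oddDivX i p - hr

theorem X_mul_pderiv_oddDivX (i : σ) (p : MvPolynomial σ R) :
    X i * (pderiv i (oddDivX i p) + oddDivX i (pderiv i p)) + oddDivX i p = pderiv i p := by
  refine mul_left_cancel₀ (two_mul_X_ne_zero i) ?_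
  have hp := congrArg (pderiv i) (two_mul_X_mul_oddDivX i p)
  simp only [pderiv_mul, pderiv_ofNat, pderiv_X_self, map_sub, pderiv_reflectX] at hp
  linear_combination X i * hp + X i * two_mul_X_mul_oddDivX i (pderiv i p)

end MvPolynomial

theorem Submodule.eq_top_of_one_mem_of_mul_mem {R A : Type*} [CommSemiring R] [Semiring A]
    [Algebra R A] {s : Set A} (hs : Algebra.adjoin R s = ⊤) {S : Submodule R A} (h1 : 1 ∈ S)
    (hmul : ∀ a ∈ s, ∀ x ∈ S, a * x ∈ S) : S = ⊤ := by
  have key : ∀ a ∈ Algebra.adjoin R s, ∀ x ∈ S, a * x ∈ S := by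
    intro a ha
    induction ha using Algebra.adjoin_induction with
    | mem a ha => exact hmul a ha
    | algebraMap r => intro x hx; rw [← Algebra.smul_def]; exact S.smul_mem r hx
    | add a b _ _ ha hb => intro x hx; rw [add_mul]; exact add_mem (ha x hx) (hb x hx)
    | mul a b _ _ ha hb => intro x hx; rw [mul_assoc]; exact ha _ (hb x hx)
  refine eq_top_iff.2 fun a _ => ?_
  simpa using key a (hs ▸ Algebra.mem_top) 1 h1

theorem Submodule.mul_mem_span_range {R A ι : Type*} [CommSemiring R] [Semiring A] [Algebra R A]
    {f : ι → A} {a : A} (h : ∀ t, a * f t ∈ span R (Set.range f)) {x : A}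
    (hx : x ∈ span R (Set.range f)) : a * x ∈ span R (Set.range f) :=
  (map_span_le (LinearMap.mulLeft R a) _ _).2 (Set.forall_mem_range.2 h) ⟨x, hx, rfl⟩

section OrderedMonomial

variable {R A : Type*} [CommRing R] [Ring A] [Algebra R A] {B K C : A}

def orderedMonomial (B K C : A) (t : ℕ × ℕ × ℕ) : A := B ^ t.1 * K ^ t.2.1 * C ^ t.2.2

theorem orderedMonomial_mem_span (t : ℕ × ℕ × ℕ) :
    orderedMonomial B K C t ∈ Submodule.span R (Set.range (orderedMonomial B K C)) :=
  Submodule.subset_span ⟨t, rfl⟩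

theorem B_mul_mem_span_orderedMonomial {x : A}
    (hx : x ∈ Submodule.span R (Set.range (orderedMonomial B K C))) :
    B * x ∈ Submodule.span R (Set.range (orderedMonomial B K C)) := by
  refine Submodule.mul_mem_span_range (fun ⟨i, j, l⟩ => ?_) hx
  convert orderedMonomial_mem_span (i + 1, j, l) using 1
  simp only [orderedMonomial, pow_succ', mul_assoc]

theorem mul_pow_eq_pow_mul_add_nsmul (hKB : K * B = B * K + B) (i : ℕ) :
    K * B ^ i = B ^ i * K + i • B ^ i := by
  induction i with
  | zero => simp
  | succ i ih =>
    rw [pow_succ, ← mul_assoc, ih, add_mul, mul_assoc, hKB, smul_mul_assoc, succ_nsmul]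
    noncomm_ring

theorem K_mul_mem_span_orderedMonomial (hKB : K * B = B * K + B) {x : A}
    (hx : x ∈ Submodule.span R (Set.range (orderedMonomial B K C))) :
    K * x ∈ Submodule.span R (Set.range (orderedMonomial B K C)) := by
  refine Submodule.mul_mem_span_range (fun ⟨i, j, l⟩ => ?_) hx
  have h : K * orderedMonomial B K C (i, j, l) =
      orderedMonomial B K C (i, j + 1, l) + i • orderedMonomial B K C (i, j, l) := by
    simp only [orderedMonomial, ← mul_assoc, mul_pow_eq_pow_mul_add_nsmul hKB, pow_succ']
    noncomm_ring
  rw [h]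
  exact add_mem (orderedMonomial_mem_span _)
    (Submodule.smul_of_tower_mem _ i (orderedMonomial_mem_span _))

theorem pow_K_add_one_mul_mem_span_orderedMonomial (hKB : K * B = B * K + B) (j : ℕ) {x : A}
    (hx : x ∈ Submodule.span R (Set.range (orderedMonomial B K C))) :
    (K + 1) ^ j * x ∈ Submodule.span R (Set.range (orderedMonomial B K C)) := by
  induction j with
  | zero => simpa using hx
  | succ j ih =>
    rw [pow_succ', mul_assoc, add_mul, one_mul]
    exact add_mem (K_mul_mem_span_orderedMonomial hKB ih) ih

theorem C_mul_mem_span_orderedMonomial (hKB : K * B = B * K + B)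
    (hCB : C * B = -B * C + 2 * K) (hCK : C * K = (K + 1) * C) {x : A}
    (hx : x ∈ Submodule.span R (Set.range (orderedMonomial B K C))) :
    C * x ∈ Submodule.span R (Set.range (orderedMonomial B K C)) := by
  refine Submodule.mul_mem_span_range (fun ⟨i, j, l⟩ => ?_) hx
  induction i generalizing j l with
  | zero =>
    have h : C * orderedMonomial B K C (0, j, l) =
        (K + 1) ^ j * orderedMonomial B K C (0, 0, l + 1) := by
      simp only [orderedMonomial, pow_zero, one_mul, ← mul_assoc, (SemiconjBy.pow_right hCK j).eq,
        pow_succ']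
    rw [h]
    exact pow_K_add_one_mul_mem_span_orderedMonomial hKB j (orderedMonomial_mem_span _)
  | succ i ih =>
    have h : C * orderedMonomial B K C (i + 1, j, l) =
        -(B * (C * orderedMonomial B K C (i, j, l)))
          + 2 * (K * orderedMonomial B K C (i, j, l)) := by
      simp only [orderedMonomial, pow_succ', ← mul_assoc, hCB]
      noncomm_ring
    rw [h]
    refine add_mem (neg_mem (B_mul_mem_span_orderedMonomial (ih j l))) ?_
    rw [two_mul]
    have hK := K_mul_mem_span_orderedMonomial hKB
      (orderedMonomial_mem_span (R := R) (C := C) (i, j, l))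
    exact add_mem hK hK

theorem span_orderedMonomial_eq_top (hgen : Algebra.adjoin R {B, K, C} = ⊤)
    (hKB : K * B = B * K + B) (hCB : C * B = -B * C + 2 * K) (hCK : C * K = (K + 1) * C) :
    Submodule.span R (Set.range (orderedMonomial B K C)) = ⊤ := by
  refine Submodule.eq_top_of_one_mem_of_mul_mem hgen ?_ ?_
  · simpa [orderedMonomial] using
      orderedMonomial_mem_span (R := R) (B := B) (K := K) (C := C) (0, 0, 0)
  · rintro a (rfl | rfl | rfl) x hx
    exacts [B_mul_mem_span_orderedMonomial hx, K_mul_mem_span_orderedMonomial hKB hx,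
      C_mul_mem_span_orderedMonomial hKB hCB hCK hx]

end OrderedMonomial

theorem MvPolynomial.linearIndependent_orderedMonomial_X (R : Type*) [CommRing R] :
    LinearIndependent R (orderedMonomial (X 0 : MvPolynomial (Fin 3) R) (X 1) (X 2)) := by
  let exponent (t : ℕ × ℕ × ℕ) : Fin 3 →₀ ℕ :=
    Finsupp.single 0 t.1 + Finsupp.single 1 t.2.1 + Finsupp.single 2 t.2.2
  have hinj : Function.Injective exponent := by
    rintro ⟨a₀, a₁, a₂⟩ ⟨b₀, b₁, b₂⟩ h
    have h₀ := DFunLike.congr_fun h 0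
    have h₁ := DFunLike.congr_fun h 1
    have h₂ := DFunLike.congr_fun h 2
    simp only [exponent, Finsupp.add_apply] at h₀ h₁ h₂
    simp_all
  have hmonomial : orderedMonomial (X 0) (X 1) (X 2) = basisMonomials (Fin 3) R ∘ exponent := by
    ext1 t
    simp [orderedMonomial, exponent, X_pow_eq_monomial, monomial_mul]
  rw [hmonomial]
  exact (basisMonomials (Fin 3) R).linearIndependent.comp exponent hinj

namespace UOsp12

def bPlus : UOsp12 := RingQuot.mkAlgHom ℂ OspRel (FreeAlgebra.ι ℂ 0)
def k : UOsp12 := RingQuot.mkAlgHom ℂ OspRel (FreeAlgebra.ι ℂ 1)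
def bMinus : UOsp12 := RingQuot.mkAlgHom ℂ OspRel (FreeAlgebra.ι ℂ 2)

theorem k_mul_bPlus : k * bPlus = bPlus * k + bPlus := by
  have h := RingQuot.mkAlgHom_rel ℂ OspRel.rel1
  simp only [map_sub, map_mul] at h
  exact sub_eq_iff_eq_add'.1 h

theorem bMinus_mul_bPlus : bMinus * bPlus = -bPlus * bMinus + 2 * k := by
  have h := RingQuot.mkAlgHom_rel ℂ OspRel.rel3
  simp only [map_add, map_mul, map_ofNat] at h
  rw [neg_mul, neg_add_eq_sub, eq_sub_iff_add_eq]
  exact h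

theorem bMinus_mul_k : bMinus * k = (k + 1) * bMinus := by
  have h := RingQuot.mkAlgHom_rel ℂ OspRel.rel2
  simp only [map_sub, map_mul, map_neg] at h
  change k * bMinus - bMinus * k = -bMinus at h
  linear_combination (norm := noncomm_ring) -h

theorem adjoin_generators_eq_top : Algebra.adjoin ℂ {bPlus, k, bMinus} = ⊤ := by
  let π : FreeAlgebra ℂ (Fin 3) →ₐ[ℂ] UOsp12 := RingQuot.mkAlgHom ℂ OspRel
  have himage : π '' Set.range (FreeAlgebra.ι ℂ) = {bPlus, k, bMinus} := by
    have h₀ : π (FreeAlgebra.ι ℂ 0) = bPlus := rfl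
    have h₁ : π (FreeAlgebra.ι ℂ 1) = k := rfl
    have h₂ : π (FreeAlgebra.ι ℂ 2) = bMinus := rfl
    ext x
    simp [Fin.exists_fin_succ, h₀, h₁, h₂, eq_comm]
  rw [← himage, ← AlgHom.map_adjoin, FreeAlgebra.adjoin_range_ι, Algebra.map_top,
    AlgHom.range_eq_top]
  exact RingQuot.mkAlgHom_surjective ℂ OspRel

local notation "𝒫" => MvPolynomial (Fin 3) ℂ

/- The operators `bPlusOp`, `kOp`, `bMinusOp` are left multiplication by `b⁺`, `k`, `b⁻` in the Ore
extension, written on `xⁱ tʲ zˡ ↔ b⁺ⁱ kʲ b⁻ˡ`: `k xⁱ = xⁱ (k + i)`, and `b⁻ p = τ(p) b⁻ + d(p)`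
for `p ∈ ℂ[b⁺][k]`, where the `τ`-derivation `d` with `d(b⁺) = 2k`, `d(k) = 0` is
`∂ₓ + (2t - 1) oddDivX 0`. -/
def τ : 𝒫 →ₐ[ℂ] 𝒫 := aeval ![-X 0, X 1 + 1, X 2]

def oreDeriv : 𝒫 →ₗ[ℂ] 𝒫 :=
  (pderiv 0).toLinearMap + LinearMap.mulLeft ℂ (2 * X 1 - 1) ∘ₗ oddDivX 0

def bPlusOp : Module.End ℂ 𝒫 := LinearMap.mulLeft ℂ (X 0)

def kOp : Module.End ℂ 𝒫 :=
  LinearMap.mulLeft ℂ (X 1) + LinearMap.mulLeft ℂ (X 0) ∘ₗ (pderiv 0).toLinearMap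

def bMinusOp : Module.End ℂ 𝒫 := LinearMap.mulLeft ℂ (X 2) ∘ₗ τ.toLinearMap + oreDeriv

@[simp] theorem τ_X_zero : τ (X 0) = -X 0 := by simp [τ]
@[simp] theorem τ_X_one : τ (X 1) = X 1 + 1 := by simp [τ]
@[simp] theorem τ_X_two : τ (X 2) = X 2 := by simp [τ]

theorem pderiv_τ (p : 𝒫) : pderiv 0 (τ p) = -τ (pderiv 0 p) :=
  pderiv_map_of_map_X_eq_neg 0 τ_X_zero (fun j hj => by fin_cases j <;> simp_all) p

@[simp] theorem oreDeriv_apply (p : 𝒫) :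
    oreDeriv p = pderiv 0 p + (2 * X 1 - 1) * oddDivX 0 p := rfl
@[simp] theorem bPlusOp_apply (p : 𝒫) : bPlusOp p = X 0 * p := rfl
@[simp] theorem kOp_apply (p : 𝒫) : kOp p = X 1 * p + X 0 * pderiv 0 p := rfl
@[simp] theorem bMinusOp_apply (p : 𝒫) : bMinusOp p = X 2 * τ p + oreDeriv p := rfl

theorem kOp_mul_bPlusOp_sub : kOp * bPlusOp - bPlusOp * kOp = bPlusOp := by
  refine LinearMap.ext fun p => ?_
  simp only [LinearMap.sub_apply, Module.End.mul_apply, bPlusOp_apply, kOp_apply, pderiv_mul,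
    pderiv_X_self]
  ring

theorem kOp_mul_bMinusOp_sub : kOp * bMinusOp - bMinusOp * kOp = -bMinusOp := by
  refine LinearMap.ext fun p => ?_
  have h1 : pderiv 0 (X 1 : 𝒫) = 0 := pderiv_X_of_ne (by decide)
  have h2 : pderiv 0 (X 2 : 𝒫) = 0 := pderiv_X_of_ne (by decide)
  have h3 : pderiv 0 (2 * X 1 - 1 : 𝒫) = 0 := by simp [h1]
  simp only [LinearMap.sub_apply, LinearMap.neg_apply, Module.End.mul_apply, kOp_apply,
    bMinusOp_apply, oreDeriv_apply, map_add, map_mul, τ_X_zero, τ_X_one, pderiv_mul,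
    pderiv_X_self, h1, h2, h3, oddDivX_X_mul, oddDivX_X_mul_of_ne (show (1 : Fin 3) ≠ 0 by decide),
    pderiv_τ]
  linear_combination (2 * X 1 - 1) * X_mul_pderiv_oddDivX 0 p

theorem bMinusOp_mul_bPlusOp_add : bMinusOp * bPlusOp + bPlusOp * bMinusOp = 2 * kOp := by
  refine LinearMap.ext fun p => ?_
  rw [two_mul]
  simp only [LinearMap.add_apply, Module.End.mul_apply, bPlusOp_apply, kOp_apply, bMinusOp_apply,
    oreDeriv_apply, map_mul, τ_X_zero, pderiv_mul, pderiv_X_self, oddDivX_X_mul]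
  ring

def polyRep : UOsp12 →ₐ[ℂ] Module.End ℂ 𝒫 :=
  RingQuot.liftAlgHom ℂ ⟨FreeAlgebra.lift ℂ ![bPlusOp, kOp, bMinusOp], fun x y h => by
    cases h <;>
      simp [map_ofNat, kOp_mul_bPlusOp_sub, kOp_mul_bMinusOp_sub, bMinusOp_mul_bPlusOp_add]⟩

@[simp] theorem polyRep_bPlus : polyRep bPlus = bPlusOp :=
  (RingQuot.liftAlgHom_mkAlgHom_apply ℂ _ _ _).trans (by simp)
@[simp] theorem polyRep_k : polyRep k = kOp :=
  (RingQuot.liftAlgHom_mkAlgHom_apply ℂ _ _ _).trans (by simp)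
@[simp] theorem polyRep_bMinus : polyRep bMinus = bMinusOp :=
  (RingQuot.liftAlgHom_mkAlgHom_apply ℂ _ _ _).trans (by simp)

theorem bMinusOp_pow_apply_one (l : ℕ) : (bMinusOp ^ l) 1 = X 2 ^ l := by
  induction l with
  | zero => rfl
  | succ l ih =>
    have hodd : oddDivX 0 (X 2 ^ l : 𝒫) = 0 := by
      rw [X_pow_eq_monomial, oddDivX_monomial, if_neg (by simp)]
    rw [pow_succ', Module.End.mul_apply, ih, bMinusOp_apply, oreDeriv_apply, hodd, map_pow,
      τ_X_two, Derivation.leibniz_pow, pderiv_X_of_ne (by decide)]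
    simp [pow_succ']

theorem kOp_pow_apply_X_two_pow (j l : ℕ) : (kOp ^ j) (X 2 ^ l) = X 1 ^ j * X 2 ^ l := by
  induction j with
  | zero => simp
  | succ j ih =>
    rw [pow_succ', Module.End.mul_apply, ih, kOp_apply]
    simp [pow_succ', mul_assoc]

theorem bPlusOp_pow_apply (i : ℕ) (p : 𝒫) : (bPlusOp ^ i) p = X 0 ^ i * p := by
  induction i with
  | zero => simp
  | succ i ih => rw [pow_succ', Module.End.mul_apply, ih, bPlusOp_apply, pow_succ', mul_assoc]

theorem polyRep_orderedMonomial_apply_one (t : ℕ × ℕ × ℕ) :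
    polyRep (orderedMonomial bPlus k bMinus t) 1 = orderedMonomial (X 0) (X 1) (X 2) t := by
  simp [orderedMonomial, bMinusOp_pow_apply_one, kOp_pow_apply_X_two_pow, bPlusOp_pow_apply,
    mul_assoc]

theorem linearIndependent_orderedMonomial :
    LinearIndependent ℂ (orderedMonomial bPlus k bMinus) := by
  let evalOne : UOsp12 →ₗ[ℂ] 𝒫 := LinearMap.applyₗ 1 ∘ₗ polyRep.toLinearMap
  have h : evalOne ∘ orderedMonomial bPlus k bMinus = orderedMonomial (X 0) (X 1) (X 2) :=
    funext polyRep_orderedMonomial_apply_one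
  refine LinearIndependent.of_comp evalOne ?_
  rw [h]
  exact linearIndependent_orderedMonomial_X ℂ

def pbwBasis : Module.Basis (ℕ × ℕ × ℕ) ℂ UOsp12 :=
  .mk linearIndependent_orderedMonomial
    (span_orderedMonomial_eq_top adjoin_generators_eq_top k_mul_bPlus bMinus_mul_bPlus
      bMinus_mul_k).ge

end UOsp12

end

/-- `U(osp(1,2))` is isomorphic as a ℂ-algebra to the iterated Ore extension
`ℂ[b⁺][k; δ][b⁻; τ, d]` where `δ = b⁺∂_{b⁺}`, `τ(b⁺) = -b⁺`, `τ(k) = k + 1`,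
`d(b⁺) = 2k`, `d(k) = 0`.  The iterated Ore extension is characterized, up to
ℂ-algebra isomorphism, as the ℂ-algebra on generators `B, K, C` with the
straightening relations `KB = BK + δ(B)`, `CB = τ(B)C + d(B)`, `CK = τ(K)C + d(K)`
in which the ordered monomials `Bⁱ Kʲ Cˡ` form a ℂ-basis. -/
theorem stmt_16 :
    ∃ (O : Type) (_ : Ring O) (_ : Algebra ℂ O) (B K C : O),
      K * B = B * K + B ∧
      C * B = -B * C + 2 * K ∧
      C * K = (K + 1) * C ∧
      (∃ β : Module.Basis (ℕ × ℕ × ℕ) ℂ O, ∀ i j l, β (i, j, l) = B ^ i * K ^ j * C ^ l) ∧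
      ∃ e : UOsp12 ≃ₐ[ℂ] O,
        e (RingQuot.mkAlgHom ℂ OspRel (FreeAlgebra.ι ℂ 0)) = B ∧
        e (RingQuot.mkAlgHom ℂ OspRel (FreeAlgebra.ι ℂ 1)) = K ∧
        e (RingQuot.mkAlgHom ℂ OspRel (FreeAlgebra.ι ℂ 2)) = C :=
  ⟨UOsp12, inferInstance, inferInstance, UOsp12.bPlus, UOsp12.k, UOsp12.bMinus, UOsp12.k_mul_bPlus,
    UOsp12.bMinus_mul_bPlus, UOsp12.bMinus_mul_k,
    ⟨UOsp12.pbwBasis, fun _ _ _ => Module.Basis.mk_apply _ _ _⟩, AlgEquiv.refl, rfl, rfl, rfl⟩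
end

section
/- In an associative ℂ-algebra containing an invertible element a⁺ and elements t', k₂', suppose t'a⁺ - a⁺t' = 1, [k₂', a⁺] = k₂'a⁺ - a⁺k₂' = 1, and t'k₂' = k₂'t' - (a⁺)⁻¹k₂' + (a⁺)⁻¹t'. Then u := a⁺t' - a⁺k₂' satisfies [u, a⁺] = 0 and [u, k₂'] = 0. -/
/-- In an associative ℂ-algebra in which `a⁺` is invertible, with
`t'a⁺ - a⁺t' = 1`, `k₂'a⁺ - a⁺k₂' = 1` and `t'k₂' - k₂'t' = (a⁺)⁻¹(t' - k₂')`,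
the element `u := a⁺t' - a⁺k₂'` commutes with `a⁺` and with `k₂'`. -/
theorem stmt_18 (R : Type*) [Ring R] [Algebra ℂ R] (a ainv t' k' : R)
    (hinv1 : a * ainv = 1) (hinv2 : ainv * a = 1)
    (h1 : t' * a - a * t' = 1)
    (h2 : k' * a - a * k' = 1)
    (h3 : t' * k' - k' * t' = ainv * (t' - k')) :
    (a * t' - a * k') * a - a * (a * t' - a * k') = 0 ∧
    (a * t' - a * k') * k' - k' * (a * t' - a * k') = 0 := by
  constructor
  · linear_combination (norm := noncomm_ring) a * h1 - a * h2
  · linear_combination (norm := noncomm_ring) a * h3 + hinv1 * (t' - k') - h2 * t' + h2 * k'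
end

section
/- For any Lie subsuperalgebra g of osp(1,2n) containing both odd generators bᵢ⁺ and bᵢ⁻ for some i, the element zᵢ := 2bᵢ⁺bᵢ⁻ - 2kᵢ + 1 of U(g) (where kᵢ = (1/2)(bᵢ⁻bᵢ⁺ + bᵢ⁺bᵢ⁻)) satisfies zᵢbᵢ⁺ = -bᵢ⁺zᵢ; consequently -1 ∈ G(Frac U(g)) and Frac U(g) is not isomorphic to a classical Weyl skew field D_{r,t}⁰. -/
open scoped commutatorElement

/- The relations make `z := 2b⁺b⁻ - 2k + 1` anticommute with `b⁺`, so the group commutator of the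
units `z` and `b⁺` is the scalar `-1`. A ℂ-algebra isomorphism would carry this commutator into
`L`, where the only scalar commutator is `1`; but `-1 ≠ 1` in characteristic zero. -/

theorem mul_anticomm_of_parabose {R : Type*} [Ring R] {bp bm k : R}
    (h1 : k * bp - bp * k = bp) (h2 : bm * bp + bp * bm = 2 * k) :
    (2 * (bp * bm) - 2 * k + 1) * bp = -(bp * (2 * (bp * bm) - 2 * k + 1)) := by
  linear_combination (norm := noncomm_ring) 2 * bp * h2 - 2 * h1

theorem Units.val_commutatorElement_eq_neg_one {R : Type*} [Ring R] {u v : Rˣ}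
    (h : (u * v : R) = -(v * u)) : ((⁅u, v⁆ : Rˣ) : R) = -1 := by
  rw [commutatorElement_def, Units.val_mul, Units.val_mul, Units.val_mul, h]
  simp

theorem exists_mem_commutator_val_eq_neg_one {R : Type*} [Ring R] {a b : R}
    (ha : IsUnit a) (hb : IsUnit b) (h : a * b = -(b * a)) :
    ∃ g ∈ commutator Rˣ, (g : R) = -1 :=
  ⟨⁅ha.unit, hb.unit⁆, Subgroup.commutator_mem_commutator (Subgroup.mem_top _)
    (Subgroup.mem_top _), Units.val_commutatorElement_eq_neg_one h⟩

theorem mul_ne_neg_mul_of_commutator_scalar_trivial {L : Type*} [DivisionRing L] [Algebra ℂ L]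
    (hL : ∀ g ∈ commutator Lˣ, (∃ c : ℂ, (g : L) = algebraMap ℂ L c) → g = 1)
    {a b : L} (ha : a ≠ 0) (hb : b ≠ 0) : a * b ≠ -(b * a) := by
  intro h
  obtain ⟨g, hg, hg_val⟩ := exists_mem_commutator_val_eq_neg_one ha.isUnit hb.isUnit h
  have hg_one : g = 1 := hL g hg ⟨-1, by simp [hg_val]⟩
  have h_neg_one : (-1 : ℂ) = 1 :=
    (algebraMap ℂ L).injective (by simpa [hg_one] using hg_val.symm)
  norm_num at h_neg_one

/-- For a Lie subsuperalgebra `g` of `osp(1,2n)` containing `bᵢ⁺` and `bᵢ⁻`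
(so `Frac U(g)` contains elements `b⁺, b⁻, k` with `[k, b⁺] = b⁺` and
`b⁻b⁺ + b⁺b⁻ = 2k`, with `b⁺` and `z := 2b⁺b⁻ - 2k + 1` nonzero), the element
`z` satisfies `zb⁺ = -b⁺z`; consequently `-1 ∈ G(Frac U(g))` and `Frac U(g)` is
not isomorphic to a classical Weyl skew field, i.e. to any skew field `L` over
ℂ with `G(L) = (L*)′ ∩ ℂ* = {1}`. -/
theorem stmt_19 (D : Type*) [DivisionRing D] [Algebra ℂ D] (bp bm k : D)
    (h1 : k * bp - bp * k = bp)
    (h2 : bm * bp + bp * bm = 2 * k)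
    (hbp : bp ≠ 0)
    (hz : 2 * (bp * bm) - 2 * k + 1 ≠ 0) :
    (2 * (bp * bm) - 2 * k + 1) * bp = -(bp * (2 * (bp * bm) - 2 * k + 1)) ∧
    (∃ g ∈ commutator Dˣ, (g : D) = algebraMap ℂ D (-1)) ∧
    ∀ (L : Type*) [DivisionRing L] [Algebra ℂ L],
      (∀ g ∈ commutator Lˣ, (∃ c : ℂ, (g : L) = algebraMap ℂ L c) → g = 1) →
      IsEmpty (D ≃ₐ[ℂ] L) := by
  set z := 2 * (bp * bm) - 2 * k + 1
  have anticomm : z * bp = -(bp * z) := mul_anticomm_of_parabose h1 h2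
  refine ⟨anticomm, ?_, fun L _ _ hL => ⟨fun φ => ?_⟩⟩
  · simpa using exists_mem_commutator_val_eq_neg_one hz.isUnit hbp.isUnit anticomm
  · refine mul_ne_neg_mul_of_commutator_scalar_trivial hL
      ((map_ne_zero φ).mpr hz) ((map_ne_zero φ).mpr hbp) ?_
    rw [← map_mul, anticomm, map_neg, map_mul]
end
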